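/- arXiv:1904.08543 — 8 statements merged into one kernel-verified Lean document; each statement's English description precedes it below -/
import Mathlib

section
/- For any polynomial q and any ε > 0, there exists N ≥ 2 such that for all n ≥ N, the filled Julia set of f_n(z) = z^n + q(z) is contained in the open disk {z : |z| < 1 + ε}. -/
open Polynomial

/-- The filled Julia set of a map `f : ℂ → ℂ`: points with bounded orbit. -/
def filledJulia (f : ℂ → ℂ) : Set ℂ := {z | ∃ C : ℝ, ∀ m : ℕ, ‖f^[m] z‖ ≤ C}

lemma poly_norm_bound (q : Polynomial ℂ) (z : ℂ) (hz : 1 ≤ ‖z‖) :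
    ‖q.eval z‖ ≤ (∑ i ∈ Finset.range (q.natDegree + 1), ‖q.coeff i‖) * ‖z‖ ^ q.natDegree := by
  rw [Polynomial.eval_eq_sum_range, Finset.sum_mul]
  refine (norm_sum_le _ _).trans (Finset.sum_le_sum fun i hi => ?_)
  rw [norm_mul, norm_pow]
  exact mul_le_mul_of_nonneg_left
    (pow_le_pow_right₀ hz (Nat.lt_succ_iff.mp (Finset.mem_range.mp hi)))
    (norm_nonneg _)

/-- for any polynomial `q` and `ε > 0` there is `N ≥ 2` such that for
all `n ≥ N` the filled Julia set of `f_n(z) = z^n + q(z)` is contained in the open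
disk of radius `1 + ε`. -/
theorem filledJulia_subset_ball (q : Polynomial ℂ) (ε : ℝ) (hε : 0 < ε) :
    ∃ N : ℕ, 2 ≤ N ∧ ∀ n ≥ N,
      filledJulia (fun z : ℂ => z ^ n + q.eval z) ⊆ Metric.ball (0 : ℂ) (1 + ε) := by
  set d := q.natDegree with hd
  set c := ∑ i ∈ Finset.range (d + 1), ‖q.coeff i‖ with hc
  have hc0 : 0 ≤ c := Finset.sum_nonneg fun i _ => norm_nonneg _
  have h1ε : (1 : ℝ) < 1 + ε := by linarith
  obtain ⟨k, hk⟩ := pow_unbounded_of_one_lt (c + 2) h1ε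
  refine ⟨max 2 (d + 1 + k), le_max_left _ _, fun n hn z hz => ?_⟩
  rw [Metric.mem_ball, dist_zero_right]
  by_contra hcon
  push_neg at hcon
  have hn2 : d + 1 + k ≤ n := le_trans (le_max_right _ _) hn
  -- key expansion estimate
  have key : ∀ w : ℂ, 1 + ε ≤ ‖w‖ → 2 * ‖w‖ ≤ ‖w ^ n + q.eval w‖ := by
    intro w hw
    have hr1 : (1 : ℝ) ≤ ‖w‖ := by linarith
    have hr0 : (0 : ℝ) ≤ ‖w‖ := by linarith
    have hq := poly_norm_bound q w hr1
    have h1 : ‖w ^ n‖ ≤ ‖w ^ n + q.eval w‖ + ‖q.eval w‖ := by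
      calc ‖w ^ n‖ = ‖(w ^ n + q.eval w) + (-(q.eval w))‖ := by ring_nf
        _ ≤ ‖w ^ n + q.eval w‖ + ‖-(q.eval w)‖ := norm_add_le _ _
        _ = ‖w ^ n + q.eval w‖ + ‖q.eval w‖ := by rw [norm_neg]
    have hrn : (c + 2) * ‖w‖ ^ (d + 1) ≤ ‖w‖ ^ n := by
      have : ‖w‖ ^ n = ‖w‖ ^ (n - (d + 1)) * ‖w‖ ^ (d + 1) := by
        rw [← pow_add, Nat.sub_add_cancel (by omega)]
      rw [this]
      have h2 : (c + 2) ≤ ‖w‖ ^ (n - (d + 1)) := by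
        calc c + 2 ≤ (1 + ε) ^ k := le_of_lt hk
          _ ≤ (1 + ε) ^ (n - (d + 1)) := pow_le_pow_right₀ (le_of_lt h1ε) (by omega)
          _ ≤ ‖w‖ ^ (n - (d + 1)) := pow_le_pow_left₀ (by linarith) hw _
      exact mul_le_mul_of_nonneg_right h2 (pow_nonneg hr0 _)
    have hcd : c * ‖w‖ ^ d ≤ c * ‖w‖ ^ (d + 1) :=
      mul_le_mul_of_nonneg_left (pow_le_pow_right₀ hr1 (Nat.le_succ d)) hc0
    have hrr : ‖w‖ ≤ ‖w‖ ^ (d + 1) := le_self_pow₀ hr1 (Nat.succ_ne_zero d)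
    have hwn : ‖w ^ n‖ = ‖w‖ ^ n := norm_pow _ _
    nlinarith [hq, h1, hrn, hcd, hrr]
  -- orbit grows
  set f : ℂ → ℂ := fun z => z ^ n + q.eval z with hf
  have grow : ∀ m : ℕ, (1 + ε) * 2 ^ m ≤ ‖f^[m] z‖ := by
    intro m
    induction m with
    | zero => simpa using hcon
    | succ m ih =>
      have hw : 1 + ε ≤ ‖f^[m] z‖ := by
        have : (1 : ℝ) ≤ 2 ^ m := one_le_pow₀ (by norm_num)
        nlinarith
      have := key (f^[m] z) hw
      rw [Function.iterate_succ_apply']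
      calc (1 + ε) * 2 ^ (m + 1) = 2 * ((1 + ε) * 2 ^ m) := by ring
        _ ≤ 2 * ‖f^[m] z‖ := by linarith
        _ ≤ ‖(f^[m] z) ^ n + q.eval (f^[m] z)‖ := this
  obtain ⟨C, hC⟩ := hz
  obtain ⟨m, hm⟩ := pow_unbounded_of_one_lt (C / (1 + ε)) (by norm_num : (1:ℝ) < 2)
  have h1 := grow m
  have h2 := hC m
  have : C < (1 + ε) * 2 ^ m := by
    rw [div_lt_iff₀ (by linarith)] at hm; linarith [hm]
  linarith
end

section
/- Let q be a polynomial and z_0 ∈ ℂ with |q^i(z_0)| < 1 for all 0 ≤ i ≤ k−1 and |q^k(z_0)| = 1. Then for any positive integer m < k there is N such that for all n ≥ N, the iterates f_n^i(z_0) for 0 ≤ i ≤ m all lie in the open unit disk, where f_n(z) = z^n + q(z). -/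
open Polynomial Filter

lemma pow_self_tendsto_zero {a : ℕ → ℂ} {w : ℂ}
    (ha : Filter.Tendsto a Filter.atTop (nhds w)) (hw : ‖w‖ < 1) :
    Filter.Tendsto (fun n => a n ^ n) Filter.atTop (nhds 0) := by
  set r : ℝ := (‖w‖ + 1) / 2 with hr
  have hr1 : r < 1 := by rw [hr]; linarith
  have hr0 : 0 ≤ r := by positivity
  have hev : ∀ᶠ n in atTop, ‖a n‖ ≤ r := by
    have h := ha.norm.eventually_lt_const (show ‖w‖ < r by rw [hr]; linarith)
    exact h.mono fun n h => h.le
  refine squeeze_zero_norm' ?_ (tendsto_pow_atTop_nhds_zero_of_lt_one hr0 hr1)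
  exact hev.mono fun n h => by
    rw [norm_pow]; exact pow_le_pow_left₀ (norm_nonneg _) h n

/-- if the `q`-orbit of `z₀` stays in the open unit disk up to time
`k-1` and hits the unit circle at time `k`, then for any `0 < m < k` and all large
`n`, the first `m` iterates of `f_n(z) = z^n + q(z)` at `z₀` stay in the open unit
disk. -/
theorem iterates_stay_in_disk (q : Polynomial ℂ) (z₀ : ℂ) (k : ℕ)
    (hlt : ∀ i < k, ‖(fun z : ℂ => q.eval z)^[i] z₀‖ < 1)
    (heq : ‖(fun z : ℂ => q.eval z)^[k] z₀‖ = 1) :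
    ∀ m : ℕ, 0 < m → m < k → ∃ N : ℕ, ∀ n ≥ N, ∀ i ≤ m,
      ‖(fun z : ℂ => z ^ n + q.eval z)^[i] z₀‖ < 1 := by
  intro m hm hmk
  have key : ∀ i ≤ m, Filter.Tendsto
      (fun n : ℕ => (fun z : ℂ => z ^ n + q.eval z)^[i] z₀) Filter.atTop
      (nhds ((fun z : ℂ => q.eval z)^[i] z₀)) := by
    intro i hi
    induction i with
    | zero => simpa using tendsto_const_nhds
    | succ i ih =>
      have hik : i < k := lt_trans (lt_of_lt_of_le (Nat.lt_succ_self i) hi) hmk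
      have ih' := ih (le_trans (Nat.le_succ i) hi)
      have hw : ‖(fun z : ℂ => q.eval z)^[i] z₀‖ < 1 := hlt i hik
      have h1 := pow_self_tendsto_zero ih' hw
      have h2 : Filter.Tendsto
          (fun n : ℕ => q.eval ((fun z : ℂ => z ^ n + q.eval z)^[i] z₀)) Filter.atTop
          (nhds (q.eval ((fun z : ℂ => q.eval z)^[i] z₀))) :=
        ((q.continuous_aeval.tendsto _).comp ih')
      have h3 := h1.add h2
      simp only [Function.iterate_succ_apply']
      simpa using h3
  have hev : ∀ᶠ n in Filter.atTop, ∀ i ∈ Finset.Iic m,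
      ‖(fun z : ℂ => z ^ n + q.eval z)^[i] z₀‖ < 1 := by
    rw [Filter.eventually_all_finset]
    intro i hi
    have hi' : i ≤ m := Finset.mem_Iic.mp hi
    have hlim := (key i hi').norm
    exact hlim.eventually_lt_const (hlt i (lt_of_le_of_lt hi' hmk))
  rcases Filter.eventually_atTop.mp hev with ⟨N, hN⟩
  exact ⟨N, fun n hn i hi => hN n hn i (Finset.mem_Iic.mpr hi)⟩
end

section
/- Let q be a polynomial and z_0 ∈ ℂ with |q^i(z_0)| < 1 for 0 ≤ i ≤ k−1 and |q^k(z_0)| = 1. Then for every ε > 0 and every integer m with 0 ≤ m ≤ k, there is N such that for all n ≥ N, max_{0 ≤ i ≤ m} |f_n^i(z_0) − q^i(z_0)| < ε, where f_n(z) = z^n + q(z). -/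
open Polynomial

lemma iterates_close_aux (q : Polynomial ℂ) (z₀ : ℂ) (k : ℕ)
    (hlt : ∀ i < k, ‖(fun z : ℂ => q.eval z)^[i] z₀‖ < 1) :
    ∀ i ≤ k, ∀ ε > (0 : ℝ), ∃ N : ℕ, ∀ n ≥ N,
      ‖(fun z : ℂ => z ^ n + q.eval z)^[i] z₀ - (fun z : ℂ => q.eval z)^[i] z₀‖ < ε := by
  intro i
  induction i with
  | zero =>
    intro _ ε hε
    exact ⟨0, fun n _ => by simpa using hε⟩
  | succ i ih =>
    intro hik ε hε
    have hik' : i < k := lt_of_lt_of_le (Nat.lt_succ_self i) hik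
    set w := (fun z : ℂ => q.eval z)^[i] z₀ with hw_def
    have hw : ‖w‖ < 1 := hlt i hik'
    set r := (1 + ‖w‖) / 2 with hr_def
    have hr0 : (0 : ℝ) ≤ r := by positivity
    have hr1 : r < 1 := by rw [hr_def]; linarith
    have hwr : ‖w‖ < r := by rw [hr_def]; linarith
    have hc : ContinuousAt (fun z : ℂ => q.eval z) w := (q.continuous).continuousAt
    obtain ⟨δ, hδ0, hδ⟩ := Metric.continuousAt_iff.mp hc (ε / 2) (half_pos hε)
    have hδ'0 : (0 : ℝ) < min δ (r - ‖w‖) := lt_min hδ0 (by linarith)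
    obtain ⟨N1, hN1⟩ := ih hik'.le (min δ (r - ‖w‖)) hδ'0
    have htend : Filter.Tendsto (fun n : ℕ => r ^ n) Filter.atTop (nhds 0) :=
      tendsto_pow_atTop_nhds_zero_of_lt_one hr0 hr1
    obtain ⟨N2, hN2⟩ := (Filter.eventually_atTop.mp
      (htend.eventually (gt_mem_nhds (half_pos hε))))
    refine ⟨max N1 N2, fun n hn => ?_⟩
    set x := (fun z : ℂ => z ^ n + q.eval z)^[i] z₀ with hx_def
    have hnear : ‖x - w‖ < min δ (r - ‖w‖) := hN1 n (le_trans (le_max_left _ _) hn)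
    have hxr : ‖x‖ ≤ r := by
      have := norm_sub_norm_le x w
      have h2 : ‖x - w‖ < r - ‖w‖ := lt_of_lt_of_le hnear (min_le_right _ _)
      linarith
    have hqx : ‖q.eval x - q.eval w‖ < ε / 2 := by
      have : dist x w < δ := by
        rw [dist_eq_norm]; exact lt_of_lt_of_le hnear (min_le_left _ _)
      simpa [dist_eq_norm] using hδ this
    have hpow : ‖x ^ n‖ < ε / 2 := by
      rw [norm_pow]
      calc ‖x‖ ^ n ≤ r ^ n := pow_le_pow_left₀ (norm_nonneg x) hxr n
        _ < ε / 2 := hN2 n (le_trans (le_max_right _ _) hn)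
    rw [Function.iterate_succ_apply', Function.iterate_succ_apply']
    calc ‖x ^ n + q.eval x - q.eval w‖
        = ‖x ^ n + (q.eval x - q.eval w)‖ := by ring_nf
      _ ≤ ‖x ^ n‖ + ‖q.eval x - q.eval w‖ := norm_add_le _ _
      _ < ε / 2 + ε / 2 := add_lt_add hpow hqx
      _ = ε := by ring

/-- under the same hypotheses, for every `ε > 0` and `m ≤ k`, the
first `m` iterates of `f_n` at `z₀` are within `ε` of the corresponding iterates
of `q`, for all large `n`. -/
theorem iterates_close_to_q (q : Polynomial ℂ) (z₀ : ℂ) (k : ℕ)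
    (hlt : ∀ i < k, ‖(fun z : ℂ => q.eval z)^[i] z₀‖ < 1)
    (heq : ‖(fun z : ℂ => q.eval z)^[k] z₀‖ = 1) :
    ∀ ε > (0 : ℝ), ∀ m ≤ k, ∃ N : ℕ, ∀ n ≥ N, ∀ i ≤ m,
      ‖(fun z : ℂ => z ^ n + q.eval z)^[i] z₀ - (fun z : ℂ => q.eval z)^[i] z₀‖ < ε := by
  intro ε hε m
  induction m with
  | zero =>
    intro _
    obtain ⟨N, hN⟩ := iterates_close_aux q z₀ k hlt 0 (Nat.zero_le k) ε hε
    exact ⟨N, fun n hn i hi => by rw [Nat.le_zero.mp hi]; exact hN n hn⟩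
  | succ m ih =>
    intro hmk
    obtain ⟨N1, hN1⟩ := ih (le_trans (Nat.le_succ m) hmk)
    obtain ⟨N2, hN2⟩ := iterates_close_aux q z₀ k hlt (m + 1) hmk ε hε
    refine ⟨max N1 N2, fun n hn i hi => ?_⟩
    rcases Nat.lt_succ_iff_lt_or_eq.mp (Nat.lt_succ_of_le hi) with h | h
    · exact hN1 n (le_trans (le_max_left _ _) hn) i (Nat.lt_succ_iff.mp h)
    · rw [h]; exact hN2 n (le_trans (le_max_right _ _) hn)
end

section
/- Let q be a polynomial with q(closed unit disk) ∩ (open unit disk) = ∅ and with min_{|z|≤1−ε}|q(z)| > 1 for some 0 < ε < 1. Then there is N such that for all n ≥ N, the open disk {|z| < 1−ε} is contained in the basin of infinity of f_n(z) = z^n + q(z); i.e., no point of that disk lies in the filled Julia set K(f_n). -/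
open Polynomial

/-- if `q(closed unit disk)` misses the open unit disk and
`min_{|z|≤1-ε}|q(z)| > 1` for some `0 < ε < 1`, then for all large `n` the disk
`{|z| < 1-ε}` lies in the basin of infinity of `f_n(z) = z^n + q(z)`. -/
theorem disk_in_basin_of_infinity (q : Polynomial ℂ) (ε : ℝ)
    (hε : 0 < ε) (hε1 : ε < 1)
    (hq : ∀ z : ℂ, ‖z‖ ≤ 1 → 1 ≤ ‖q.eval z‖)
    (hmin : ∀ z : ℂ, ‖z‖ ≤ 1 - ε → 1 < ‖q.eval z‖) :
    ∃ N : ℕ, ∀ n ≥ N, ∀ z : ℂ, ‖z‖ < 1 - ε →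
      z ∉ filledJulia (fun w : ℂ => w ^ n + q.eval w) := by
  have hε' : (0:ℝ) < 1 - ε := by linarith
  -- min of ‖q‖ on closed ball of radius 1-ε
  obtain ⟨z0, hz0mem, hz0min⟩ := (isCompact_closedBall (0:ℂ) (1-ε)).exists_isMinOn
    ⟨0, by simp [Metric.mem_closedBall]; linarith⟩
    (q.continuous.norm.continuousOn)
  set m : ℝ := ‖q.eval z0‖ with hm_def
  have hz0norm : ‖z0‖ ≤ 1 - ε := by
    simpa [Metric.mem_closedBall, Complex.dist_eq] using hz0mem
  have hm : 1 < m := hmin z0 hz0norm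
  have hqmin : ∀ z : ℂ, ‖z‖ ≤ 1 - ε → m ≤ ‖q.eval z‖ := by
    intro z hz
    exact hz0min (by simpa [Metric.mem_closedBall, Complex.dist_eq] using hz)
  set d : ℕ := q.natDegree with hd_def
  set C : ℝ := ∑ i ∈ Finset.range (d+1), ‖q.coeff i‖ with hC_def
  have hC0 : 0 ≤ C := Finset.sum_nonneg fun i _ => norm_nonneg _
  have hCbound : ∀ z : ℂ, 1 ≤ ‖z‖ → ‖q.eval z‖ ≤ C * ‖z‖ ^ d := by
    intro z hz
    have h1 : q.eval z = ∑ i ∈ Finset.range (d+1), q.coeff i * z ^ i := by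
      rw [q.eval_eq_sum_range]
    rw [h1, Finset.sum_mul]
    refine (norm_sum_le _ _).trans (Finset.sum_le_sum fun i hi => ?_)
    rw [norm_mul, norm_pow]
    exact mul_le_mul_of_nonneg_left
      (pow_le_pow_right₀ hz (Nat.lt_succ_iff.mp (Finset.mem_range.mp hi)))
      (norm_nonneg _)
  set R : ℝ := (m + 1) / 2 with hR_def
  have hR : 1 < R := by simp only [hR_def]; linarith
  obtain ⟨k1, hk1⟩ := exists_pow_lt_of_lt_one (show (0:ℝ) < (m-1)/2 by linarith)
    (show 1 - ε < 1 by linarith)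
  obtain ⟨k2, hk2⟩ := pow_unbounded_of_one_lt (C + 2) hR
  refine ⟨max k1 (d + 1 + k2), fun n hn z hz hmem => ?_⟩
  have hn1 : k1 ≤ n := le_trans (le_max_left _ _) hn
  have hn2 : d + 1 + k2 ≤ n := le_trans (le_max_right _ _) hn
  set f : ℂ → ℂ := fun w => w ^ n + q.eval w with hf_def
  -- Step 1: f z has norm ≥ R
  have step1 : R ≤ ‖f z‖ := by
    have h1 : ‖z‖ ^ n ≤ (1 - ε) ^ n :=
      pow_le_pow_left₀ (norm_nonneg z) hz.le n
    have h2 : (1 - ε) ^ n ≤ (1 - ε) ^ k1 :=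
      pow_le_pow_of_le_one hε'.le (by linarith) hn1
    have h3 : m ≤ ‖q.eval z‖ := hqmin z hz.le
    have h4 : ‖q.eval z‖ ≤ ‖z ^ n + q.eval z‖ + ‖z‖ ^ n := by
      have h := norm_sub_le (z ^ n + q.eval z) (z ^ n)
      rwa [add_sub_cancel_left, norm_pow] at h
    simp only [hf_def]
    nlinarith [hk1]
  -- Step 2: growth for ‖w‖ ≥ R
  have step2 : ∀ w : ℂ, R ≤ ‖w‖ → 2 * ‖w‖ ≤ ‖f w‖ := by
    intro w hw
    have hw1 : 1 ≤ ‖w‖ := le_trans hR.le hw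
    have hdn : d + 1 ≤ n := by omega
    have hsplit : ‖w‖ ^ n = ‖w‖ ^ (d+1) * ‖w‖ ^ (n - (d+1)) := by
      rw [← pow_add]; congr 1; omega
    have hk2' : C + 2 ≤ R ^ (n - (d+1)) := by
      calc C + 2 ≤ R ^ k2 := hk2.le
        _ ≤ R ^ (n - (d+1)) := pow_le_pow_right₀ hR.le (by omega)
    have hRw : R ^ (n - (d+1)) ≤ ‖w‖ ^ (n - (d+1)) :=
      pow_le_pow_left₀ (by linarith) hw _
    have hqw : ‖q.eval w‖ ≤ C * ‖w‖ ^ (d+1) := by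
      calc ‖q.eval w‖ ≤ C * ‖w‖ ^ d := hCbound w hw1
        _ ≤ C * ‖w‖ ^ (d+1) :=
          mul_le_mul_of_nonneg_left (pow_le_pow_right₀ hw1 (by omega)) hC0
    have h4 : ‖w‖ ^ n ≤ ‖w ^ n + q.eval w‖ + ‖q.eval w‖ := by
      have h := norm_sub_le (w ^ n + q.eval w) (q.eval w)
      rwa [add_sub_cancel_right, norm_pow] at h
    have hwd : ‖w‖ ≤ ‖w‖ ^ (d+1) := by
      calc ‖w‖ = ‖w‖ ^ 1 := (pow_one _).symm
        _ ≤ ‖w‖ ^ (d+1) := pow_le_pow_right₀ hw1 (by omega)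
    have key : 2 * ‖w‖ ≤ ‖w‖ ^ n - ‖q.eval w‖ := by
      rw [hsplit]
      have h5 : ‖w‖ ^ (d+1) * (C + 2) ≤ ‖w‖ ^ (d+1) * ‖w‖ ^ (n - (d+1)) := by
        apply mul_le_mul_of_nonneg_left _ (by positivity)
        linarith
      nlinarith
    simp only [hf_def]
    linarith
  -- Step 3: iterates grow
  have step3 : ∀ k : ℕ, 2 ^ k * R ≤ ‖f^[k] (f z)‖ := by
    intro k
    induction k with
    | zero => simpa using step1
    | succ k ih =>
      have hRk : R ≤ ‖f^[k] (f z)‖ := by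
        have h1 : (1:ℝ) ≤ 2 ^ k := one_le_pow₀ (by norm_num)
        nlinarith
      have := step2 _ hRk
      rw [Function.iterate_succ_apply']
      calc 2 ^ (k+1) * R = 2 * (2 ^ k * R) := by ring
        _ ≤ 2 * ‖f^[k] (f z)‖ := by linarith
        _ ≤ ‖f (f^[k] (f z))‖ := this
  obtain ⟨C0, hC0b⟩ := hmem
  obtain ⟨k, hk⟩ := pow_unbounded_of_one_lt C0 (show (1:ℝ) < 2 by norm_num)
  have h1 := hC0b (k + 1)
  rw [Function.iterate_succ_apply] at h1
  have h2 := step3 k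
  nlinarith [h2, hk, (show (0:ℝ) < 2^k by positivity)]
end

section
/- Let q be a polynomial such that q(closed unit disk) is not contained in the closed unit disk. Then there exist z_0 with |z_0| < 1, r > 0, and N such that B(z_0, r) ⊂ open unit disk, and for all n ≥ N and all z ∈ B(z_0, r), |z^n + q(z)| > 1. In particular z_0 ∉ K(f_n) for all n ≥ N. -/
open Polynomial

lemma poly_bound (q : Polynomial ℂ) :
    ∃ C : ℝ, 0 ≤ C ∧ ∀ z : ℂ, 1 ≤ ‖z‖ → ‖q.eval z‖ ≤ C * ‖z‖ ^ q.natDegree := by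
  refine ⟨∑ i ∈ Finset.range (q.natDegree + 1), ‖q.coeff i‖,
    Finset.sum_nonneg (fun _ _ => norm_nonneg _), ?_⟩
  intro z hz
  rw [Polynomial.eval_eq_sum_range]
  calc ‖∑ i ∈ Finset.range (q.natDegree+1), q.coeff i * z ^ i‖
      ≤ ∑ i ∈ Finset.range (q.natDegree+1), ‖q.coeff i * z ^ i‖ := norm_sum_le _ _
    _ ≤ ∑ i ∈ Finset.range (q.natDegree+1), ‖q.coeff i‖ * ‖z‖ ^ q.natDegree := by
        apply Finset.sum_le_sum
        intro i hi
        rw [norm_mul, norm_pow]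
        exact mul_le_mul_of_nonneg_left
          (pow_le_pow_right₀ hz (Nat.lt_succ_iff.mp (Finset.mem_range.mp hi))) (norm_nonneg _)
    _ = (∑ i ∈ Finset.range (q.natDegree+1), ‖q.coeff i‖) * ‖z‖ ^ q.natDegree := by
        rw [Finset.sum_mul]

lemma escape_lemma (q : Polynomial ℂ) (ε : ℝ) (hε : 0 < ε) :
    ∃ N : ℕ, ∀ n ≥ N, ∀ z : ℂ, 1 + ε ≤ ‖z‖ → 2 * ‖z‖ ≤ ‖z ^ n + q.eval z‖ := by
  obtain ⟨C, hC0, hC⟩ := poly_bound q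
  obtain ⟨k, hk⟩ := pow_unbounded_of_one_lt (C + 2) (by linarith : (1:ℝ) < 1 + ε)
  refine ⟨q.natDegree + 1 + k, fun n hn z hz => ?_⟩
  have h1 : (1:ℝ) ≤ ‖z‖ := by linarith
  have hz0 : (0:ℝ) ≤ ‖z‖ := by linarith
  have key : (C + 2) * ‖z‖ ^ (q.natDegree + 1) ≤ ‖z‖ ^ n := by
    calc (C+2) * ‖z‖^(q.natDegree+1) ≤ (1+ε)^k * ‖z‖^(q.natDegree+1) :=
          mul_le_mul_of_nonneg_right hk.le (pow_nonneg hz0 _)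
      _ ≤ ‖z‖^k * ‖z‖^(q.natDegree+1) :=
          mul_le_mul_of_nonneg_right (pow_le_pow_left₀ (by linarith) hz _)
            (pow_nonneg hz0 _)
      _ = ‖z‖^(k + (q.natDegree+1)) := (pow_add _ _ _).symm
      _ ≤ ‖z‖^n := pow_le_pow_right₀ h1 (by omega)
  have hqb := hC z h1
  have htri : ‖z‖ ^ n ≤ ‖z ^ n + q.eval z‖ + ‖q.eval z‖ := by
    calc ‖z‖ ^ n = ‖(z ^ n + q.eval z) - q.eval z‖ := by rw [add_sub_cancel_right, norm_pow]
      _ ≤ ‖z ^ n + q.eval z‖ + ‖q.eval z‖ := norm_sub_le _ _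
  have hd1 : ‖z‖ ^ q.natDegree ≤ ‖z‖ ^ (q.natDegree + 1) :=
    pow_le_pow_right₀ h1 (Nat.le_succ _)
  have hd2 : ‖z‖ ≤ ‖z‖ ^ (q.natDegree + 1) := by
    calc ‖z‖ = ‖z‖ ^ 1 := (pow_one _).symm
      _ ≤ ‖z‖ ^ (q.natDegree + 1) := pow_le_pow_right₀ h1 (by omega)
  nlinarith [key, hqb, htri, hd1, hd2]

/-- if `q(closed unit disk)` is not contained in the closed unit
disk, then there are `z₀` in the open unit disk, `r > 0`, and `N` with
`B(z₀,r) ⊆ 𝔻`, `|z^n + q(z)| > 1` on `B(z₀,r)` for `n ≥ N`, and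
`z₀ ∉ K(f_n)` for all `n ≥ N`. -/
theorem escape_ball_exists (q : Polynomial ℂ)
    (hq : ¬ ((fun z : ℂ => q.eval z) '' Metric.closedBall (0 : ℂ) 1 ⊆
      Metric.closedBall (0 : ℂ) 1)) :
    ∃ (z₀ : ℂ) (r : ℝ) (N : ℕ), ‖z₀‖ < 1 ∧ 0 < r ∧
      Metric.ball z₀ r ⊆ Metric.ball (0 : ℂ) 1 ∧
      (∀ n ≥ N, ∀ z ∈ Metric.ball z₀ r, 1 < ‖z ^ n + q.eval z‖) ∧
      (∀ n ≥ N, z₀ ∉ filledJulia (fun w : ℂ => w ^ n + q.eval w)) := by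
  rw [Set.not_subset] at hq
  obtain ⟨y, hy, hy2⟩ := hq
  obtain ⟨w, hw, rfl⟩ := hy
  rw [Metric.mem_closedBall, dist_eq_norm, sub_zero] at hw
  rw [Metric.mem_closedBall, dist_eq_norm, sub_zero, not_le] at hy2
  have hqc : Continuous fun z : ℂ => q.eval z := q.continuous
  have hc1 : 1 < ‖q.eval w‖ := hy2
  obtain ⟨δ, hδ0, hδ⟩ := Metric.continuousAt_iff.mp (hqc.continuousAt (x := w))
    ((‖q.eval w‖ - 1)/2) (by linarith)
  set t : ℝ := 1 - min δ 1 / 2 with ht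
  have htm : 0 < min δ 1 := lt_min hδ0 one_pos
  have htm1 : min δ 1 ≤ 1 := min_le_right _ _
  have htmδ : min δ 1 ≤ δ := min_le_left _ _
  have ht0 : 0 < t := by rw [ht]; linarith
  have ht1 : t < 1 := by rw [ht]; linarith
  set z₀ : ℂ := (t : ℂ) * w with hz₀def
  have hz₀norm : ‖z₀‖ < 1 := by
    rw [hz₀def, norm_mul]
    have h : ‖(t:ℂ)‖ = t := by
      rw [Complex.norm_real, Real.norm_eq_abs, abs_of_pos ht0]
    rw [h]
    nlinarith [norm_nonneg w]
  have hdist : dist z₀ w < δ := by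
    rw [dist_eq_norm, hz₀def]
    have h : (t : ℂ) * w - w = ((t : ℂ) - 1) * w := by ring
    rw [h, norm_mul]
    have h1 : ‖(t:ℂ) - 1‖ = 1 - t := by
      rw [show ((t:ℂ) - 1) = ((t - 1 : ℝ) : ℂ) by push_cast; ring,
        Complex.norm_real, Real.norm_eq_abs, abs_of_neg (by linarith)]
      ring
    rw [h1]
    have h2 : 1 - t = min δ 1 / 2 := by rw [ht]; ring
    have h3 : (1 - t) * ‖w‖ ≤ (1 - t) * 1 := mul_le_mul_of_nonneg_left hw (by linarith)
    rw [mul_one] at h3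
    have h4 : min δ 1 / 2 < δ := by
      rcases le_total δ 1 with hd | hd
      · rw [min_eq_left hd]; linarith
      · rw [min_eq_right hd]; linarith
    clear_value z₀ t
    linarith
  have hq0 : 1 < ‖q.eval z₀‖ := by
    have h1 := hδ hdist
    rw [dist_eq_norm] at h1
    have h2 : ‖q.eval w‖ - ‖q.eval z₀‖ ≤ ‖q.eval z₀ - q.eval w‖ := by
      rw [norm_sub_rev]; exact norm_sub_norm_le _ _
    linarith
  set ε : ℝ := (‖q.eval z₀‖ - 1) / 3 with hε
  have hε0 : 0 < ε := by rw [hε]; linarith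
  obtain ⟨δ₂, hδ₂0, hδ₂⟩ := Metric.continuousAt_iff.mp (hqc.continuousAt (x := z₀)) ε hε0
  set r : ℝ := min δ₂ ((1 - ‖z₀‖)/2) with hr
  have hr0 : 0 < r := lt_min hδ₂0 (by linarith)
  set s : ℝ := (1 + ‖z₀‖)/2 with hs
  have hs0 : 0 ≤ s := by positivity
  have hs1 : s < 1 := by rw [hs]; linarith
  have hball : ∀ z ∈ Metric.ball z₀ r, ‖z‖ < s ∧ 1 + 2*ε < ‖q.eval z‖ := by
    intro z hz
    rw [Metric.mem_ball, dist_eq_norm] at hz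
    constructor
    · have h1 : ‖z‖ ≤ ‖z - z₀‖ + ‖z₀‖ := by
        calc ‖z‖ = ‖(z - z₀) + z₀‖ := by ring_nf
          _ ≤ ‖z - z₀‖ + ‖z₀‖ := norm_add_le _ _
      have h3 : r ≤ (1 - ‖z₀‖)/2 := min_le_right _ _
      rw [hs]; linarith
    · have h4 : dist z z₀ < δ₂ := by
        rw [dist_eq_norm]; exact lt_of_lt_of_le hz (min_le_left _ _)
      have h5 := hδ₂ h4
      rw [dist_eq_norm] at h5
      have h6 : ‖q.eval z₀‖ - ‖q.eval z‖ ≤ ‖q.eval z - q.eval z₀‖ := by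
        rw [norm_sub_rev]; exact norm_sub_norm_le _ _
      have h7 : ‖q.eval z₀‖ = 1 + 3*ε := by rw [hε]; ring
      linarith
  have hsub : Metric.ball z₀ r ⊆ Metric.ball (0:ℂ) 1 := by
    intro z hz
    rw [Metric.mem_ball, dist_eq_norm, sub_zero]
    exact lt_of_lt_of_le (hball z hz).1 hs1.le
  obtain ⟨N₁, hN₁⟩ := exists_pow_lt_of_lt_one hε0 hs1
  obtain ⟨N₂, hN₂⟩ := escape_lemma q ε hε0
  have hstrong : ∀ n ≥ max N₁ N₂, ∀ z ∈ Metric.ball z₀ r, 1 + ε ≤ ‖z ^ n + q.eval z‖ := by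
    intro n hn z hz
    obtain ⟨hzs, hzq⟩ := hball z hz
    have hpow : ‖z‖ ^ n < ε := by
      calc ‖z‖ ^ n ≤ s ^ n := pow_le_pow_left₀ (norm_nonneg _) hzs.le n
        _ ≤ s ^ N₁ := pow_le_pow_of_le_one hs0 hs1.le (le_trans (le_max_left _ _) hn)
        _ < ε := hN₁
    have htri : ‖q.eval z‖ ≤ ‖z ^ n + q.eval z‖ + ‖z ^ n‖ := by
      calc ‖q.eval z‖ = ‖(z ^ n + q.eval z) - z ^ n‖ := by congr 1; ring
        _ ≤ ‖z ^ n + q.eval z‖ + ‖z ^ n‖ := norm_sub_le _ _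
    rw [norm_pow] at htri
    linarith
  refine ⟨z₀, r, max N₁ N₂, hz₀norm, hr0, hsub, ?_, ?_⟩
  · intro n hn z hz
    have := hstrong n hn z hz
    linarith
  · intro n hn hmem
    obtain ⟨C, hC⟩ := hmem
    set f : ℂ → ℂ := fun w => w ^ n + q.eval w with hf
    have hesc := hN₂ n (le_trans (le_max_right _ _) hn)
    have hgrow : ∀ m : ℕ, (1 + ε) * 2 ^ m ≤ ‖f^[m+1] z₀‖ := by
      intro m
      induction m with
      | zero =>
        simp only [pow_zero, mul_one, Function.iterate_one]
        exact hstrong n hn z₀ (Metric.mem_ball_self hr0)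
      | succ m ih =>
        rw [Function.iterate_succ_apply']
        set u := f^[m+1] z₀
        have h1 : 1 + ε ≤ ‖u‖ := by
          have h2 : (1:ℝ) ≤ 2 ^ m := one_le_pow₀ (by norm_num : (1:ℝ) ≤ 2)
          nlinarith
        have h3 := hesc u h1
        calc (1 + ε) * 2 ^ (m+1) = 2 * ((1 + ε) * 2 ^ m) := by ring
          _ ≤ 2 * ‖u‖ := by linarith
          _ ≤ ‖f u‖ := h3
    obtain ⟨m, hm⟩ := pow_unbounded_of_one_lt C (by norm_num : (1:ℝ) < 2)
    have h0 := hC (m+1)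
    have h4 := hgrow m
    have h5 : (2:ℝ) ^ m ≤ (1+ε) * 2 ^ m := by nlinarith [pow_pos (by norm_num : (0:ℝ) < 2) m]
    simp only [hf] at h4
    linarith
end

section
/- Let q be a nonzero polynomial and n > deg q. Then the polynomial f_n(z) = z^n + q(z) has exactly n roots in ℂ counted with multiplicity, and for every ε > 0 there is N such that for all n ≥ N, every root z of f_n satisfies |z| < 1 + ε. -/
open Polynomial

/-- for nonzero `q` and `n > deg q`, `X^n + q` has exactly `n` roots
counted with multiplicity, and for every `ε > 0` all roots eventually lie in the
disk of radius `1 + ε`. -/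
theorem roots_card_and_location (q : Polynomial ℂ) (hq : q ≠ 0) :
    (∀ n : ℕ, q.natDegree < n → Multiset.card ((X ^ n + q : Polynomial ℂ).roots) = n) ∧
    (∀ ε : ℝ, 0 < ε → ∃ N : ℕ, ∀ n ≥ N,
      ∀ z ∈ ((X ^ n + q : Polynomial ℂ).roots), ‖z‖ < 1 + ε) := by
  set d := q.natDegree with hd
  have hdeg : ∀ n : ℕ, d < n → (X ^ n + q : Polynomial ℂ).natDegree = n := by
    intro n hn
    have h1 : q.natDegree < (X ^ n : Polynomial ℂ).natDegree := by
      rwa [natDegree_X_pow]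
    rw [natDegree_add_eq_left_of_natDegree_lt h1, natDegree_X_pow]
  constructor
  · intro n hn
    have h := splits_iff_card_roots.mp (IsAlgClosed.splits (X ^ n + q : Polynomial ℂ))
    rwa [hdeg n hn] at h
  · intro ε hε
    set C := ∑ i ∈ Finset.range (d + 1), ‖q.coeff i‖ with hC
    have hC0 : 0 ≤ C := Finset.sum_nonneg fun i _ => norm_nonneg _
    have h1ε : (1:ℝ) < 1 + ε := by linarith
    obtain ⟨N0, hN0⟩ := pow_unbounded_of_one_lt C h1ε
    refine ⟨N0 + d + 1, fun n hn z hz => ?_⟩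
    by_contra hge
    push_neg at hge
    have hz1 : (1:ℝ) ≤ ‖z‖ := le_trans (le_of_lt h1ε) hge
    obtain ⟨hne, hroot⟩ := mem_roots'.mp hz
    have hadd : z ^ n + q.eval z = 0 := by simpa using hroot
    have heval : z ^ n = -q.eval z := by linear_combination hadd
    -- bound ‖q.eval z‖ ≤ C * ‖z‖^d
    have hqbound : ‖q.eval z‖ ≤ C * ‖z‖ ^ d := by
      rw [eval_eq_sum_range]
      calc ‖∑ i ∈ Finset.range (d + 1), q.coeff i * z ^ i‖
          ≤ ∑ i ∈ Finset.range (d + 1), ‖q.coeff i * z ^ i‖ := norm_sum_le _ _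
        _ ≤ ∑ i ∈ Finset.range (d + 1), ‖q.coeff i‖ * ‖z‖ ^ d := by
            apply Finset.sum_le_sum
            intro i hi
            rw [norm_mul, norm_pow]
            exact mul_le_mul_of_nonneg_left
              (pow_le_pow_right₀ hz1 (Nat.lt_succ_iff.mp (Finset.mem_range.mp hi)))
              (norm_nonneg _)
        _ = C * ‖z‖ ^ d := by rw [hC, Finset.sum_mul]
    have hn1 : d ≤ n := by omega
    have hsplit : ‖z‖ ^ n = ‖z‖ ^ (n - d) * ‖z‖ ^ d := by
      rw [← pow_add]; congr 1; omega
    have hzn : ‖z‖ ^ n = ‖q.eval z‖ := by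
      rw [← norm_pow, heval, norm_neg]
    have hpowd : (0:ℝ) < ‖z‖ ^ d := pow_pos (lt_of_lt_of_le (by linarith) hge) d
    have key : ‖z‖ ^ (n - d) ≤ C := by
      have := hqbound
      rw [← hzn, hsplit] at this
      exact le_of_mul_le_mul_right this hpowd
    have hlow : (1 + ε) ^ N0 ≤ ‖z‖ ^ (n - d) := by
      calc (1 + ε) ^ N0 ≤ (1 + ε) ^ (n - d) :=
            pow_le_pow_right₀ (le_of_lt h1ε) (by omega)
        _ ≤ ‖z‖ ^ (n - d) := pow_le_pow_left₀ (by linarith) hge _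
    linarith
end

section
/- Let q be a polynomial with an attracting fixed point z_0 in the open unit disk, i.e., q(z_0) = z_0 and |q'(z_0)| < 1. Then for every ε > 0 there is N such that for all n ≥ N, f_n(z) = z^n + q(z) has a fixed point z_n with |z_n − z_0| < ε and |f_n'(z_n)| < 1. -/
/-!
Near `z₀` the derivative of `q` is bounded by some `K < 1`, and `n z^(n-1) → 0` locally
uniformly on the unit disk, so for large `n` the derivative of `f_n` is still bounded by `K` on a
small closed ball around `z₀` and `f_n` is a `K`-contraction there. As `f_n z₀ - z₀ = z₀^n → 0`,
`f_n` also maps the ball into itself, and Banach's fixed point theorem gives the fixed point `z_n`,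
at which `‖f_n' z_n‖ ≤ K < 1`.
-/

open Filter Function Metric Set Topology
open scoped NNReal

theorem exists_isFixedPt_mem_closedBall {α : Type*} [MetricSpace α] [CompleteSpace α]
    {f : α → α} {K : ℝ≥0} {x : α} {r : ℝ} (hK : K < 1)
    (hf : LipschitzOnWith K f (closedBall x r)) (hx : dist (f x) x ≤ (1 - K) * r) :
    ∃ y ∈ closedBall x r, IsFixedPt f y := by
  have hr : 0 ≤ r :=
    nonneg_of_mul_nonneg_right (dist_nonneg.trans hx) (sub_pos.2 (by exact_mod_cast hK))
  have hx_mem : x ∈ closedBall x r := mem_closedBall_self hr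
  have hmaps : MapsTo f (closedBall x r) (closedBall x r) := fun y hy =>
    calc dist (f y) x ≤ dist (f y) (f x) + dist (f x) x := dist_triangle _ _ _
      _ ≤ K * dist y x + (1 - K) * r := add_le_add (hf.dist_le_mul y hy x hx_mem) hx
      _ ≤ K * r + (1 - K) * r := by gcongr; exact hy
      _ = r := by ring
  obtain ⟨y, hy, hfy, -⟩ := ContractingWith.exists_fixedPoint' isClosed_closedBall.isComplete
    hmaps ⟨hK, hf.mapsToRestrict hmaps⟩ hx_mem (edist_ne_top _ _)
  exact ⟨y, hy, hfy⟩

theorem exists_isFixedPt_mem_closedBall_of_hasDerivAt {𝕜 : Type*} [RCLike 𝕜] {f f' : 𝕜 → 𝕜}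
    {K : ℝ≥0} {x : 𝕜} {r : ℝ} (hK : K < 1)
    (hf : ∀ z ∈ closedBall x r, HasDerivAt f (f' z) z) (hf' : ∀ z ∈ closedBall x r, ‖f' z‖₊ ≤ K)
    (hx : dist (f x) x ≤ (1 - K) * r) : ∃ y ∈ closedBall x r, IsFixedPt f y :=
  exists_isFixedPt_mem_closedBall hK
    ((convex_closedBall x r).lipschitzOnWith_of_nnnorm_hasDerivWithin_le
      (fun z hz => (hf z hz).hasDerivWithinAt) hf') hx

theorem TendstoLocallyUniformlyOn.exists_mem_nhds_eventually_norm_lt {ι α E : Type*}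
    [TopologicalSpace α] [SeminormedAddCommGroup E] {F : ι → α → E} {g : α → E} {l : Filter ι}
    {U : Set α} {x : α} {K : ℝ} (hF : TendstoLocallyUniformlyOn F g l U) (hU : U ∈ 𝓝 x)
    (hg : ContinuousAt g x) (hK : ‖g x‖ < K) :
    ∃ V ∈ 𝓝 x, ∀ᶠ n in l, ∀ z ∈ V, ‖F n z‖ < K := by
  obtain ⟨m, hgm, hmK⟩ := exists_between hK
  obtain ⟨t, ht, hFt⟩ :=
    Metric.tendstoLocallyUniformlyOn_iff.1 hF (K - m) (sub_pos.2 hmK) x (mem_of_mem_nhds hU)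
  rw [nhdsWithin_eq_nhds.2 hU] at ht
  refine ⟨t ∩ {z | ‖g z‖ < m}, inter_mem ht (hg.norm.eventually (gt_mem_nhds hgm)), ?_⟩
  filter_upwards [hFt] with n hn z ⟨hzt, hzm⟩
  calc ‖F n z‖ ≤ ‖g z‖ + ‖F n z - g z‖ := norm_le_norm_add_norm_sub' _ _
    _ < m + (K - m) := add_lt_add hzm (by simpa [dist_eq_norm'] using hn z hzt)
    _ = K := by ring

theorem eventually_exists_attracting_isFixedPt_near {𝕜 ι : Type*} [RCLike 𝕜] {l : Filter ι}
    {f f' : ι → 𝕜 → 𝕜} {g' : 𝕜 → 𝕜} {U : Set 𝕜} {z₀ : 𝕜} (hU : U ∈ 𝓝 z₀)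
    (hf : ∀ n, ∀ z ∈ U, HasDerivAt (f n) (f' n z) z)
    (hfz₀ : Tendsto (fun n => f n z₀) l (𝓝 z₀)) (hf' : TendstoLocallyUniformlyOn f' g' l U)
    (hg' : ContinuousAt g' z₀) (hattr : ‖g' z₀‖ < 1) {ε : ℝ} (hε : 0 < ε) :
    ∀ᶠ n in l, ∃ z, IsFixedPt (f n) z ∧ ‖z - z₀‖ < ε ∧ ‖f' n z‖ < 1 := by
  obtain ⟨K, hgK, hK1⟩ := exists_between hattr
  obtain ⟨V, hV, hbound⟩ := hf'.exists_mem_nhds_eventually_norm_lt hU hg' hgK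
  obtain ⟨δ, hδ, hδUV⟩ := nhds_basis_closedBall.mem_iff.1 (inter_mem hU hV)
  set r := min δ (ε / 2)
  have hr : 0 < r := lt_min hδ (half_pos hε)
  have hball : closedBall z₀ r ⊆ U ∩ V :=
    (closedBall_subset_closedBall (min_le_left _ _)).trans hδUV
  lift K to ℝ≥0 using (norm_nonneg _).trans hgK.le
  filter_upwards [hbound, Metric.tendsto_nhds.1 hfz₀ _ (mul_pos (sub_pos.2 hK1) hr)]
    with n hn hnz₀
  obtain ⟨z, hz, hfz⟩ := exists_isFixedPt_mem_closedBall_of_hasDerivAt (by exact_mod_cast hK1)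
    (fun z hz => hf n z (hball hz).1) (fun z hz => NNReal.coe_le_coe.1 (hn z (hball hz).2).le)
    hnz₀.le
  refine ⟨z, hfz, ?_, (hn z (hball hz).2).trans hK1⟩
  calc ‖z - z₀‖ ≤ r := mem_closedBall_iff_norm.1 hz
    _ ≤ ε / 2 := min_le_right _ _
    _ < ε := half_lt_self hε

theorem tendstoLocallyUniformlyOn_const {ι α β : Type*} [TopologicalSpace α] [UniformSpace β]
    (l : Filter ι) (f : α → β) (s : Set α) : TendstoLocallyUniformlyOn (fun _ => f) f l s :=
  fun _ hu _ _ => ⟨univ, univ_mem, .of_forall fun _ _ _ => refl_mem_uniformity hu⟩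

theorem tendsto_natCast_mul_pow_sub_one_atTop_nhds_zero {ρ : ℝ} (hρ0 : 0 ≤ ρ) (hρ1 : ρ < 1) :
    Tendsto (fun n : ℕ => n * ρ ^ (n - 1)) atTop (𝓝 0) := by
  rw [← tendsto_add_atTop_iff_nat 1]
  simpa [add_mul] using (tendsto_self_mul_const_pow_of_lt_one hρ0 hρ1).add
    (tendsto_pow_atTop_nhds_zero_of_lt_one hρ0 hρ1)

theorem tendstoLocallyUniformlyOn_natCast_mul_pow_sub_one {𝕜 : Type*} [NormedField 𝕜] :
    TendstoLocallyUniformlyOn (fun (n : ℕ) (z : 𝕜) => n * z ^ (n - 1)) 0 atTop (ball 0 1) := by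
  refine Metric.tendstoLocallyUniformlyOn_iff.2 fun ε hε x hx => ?_
  obtain ⟨ρ, hxρ, hρ1⟩ := exists_between (mem_ball_zero_iff.1 hx)
  have hρ0 : 0 ≤ ρ := (norm_nonneg x).trans hxρ.le
  refine ⟨ball 0 ρ, mem_nhdsWithin_of_mem_nhds (isOpen_ball.mem_nhds (mem_ball_zero_iff.2 hxρ)), ?_⟩
  filter_upwards [(tendsto_natCast_mul_pow_sub_one_atTop_nhds_zero hρ0 hρ1).eventually
    (gt_mem_nhds hε)] with n hn z hz
  calc dist 0 ((n : 𝕜) * z ^ (n - 1)) = ‖(n : 𝕜)‖ * ‖z‖ ^ (n - 1) := by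
        rw [dist_zero_left, norm_mul, norm_pow]
    _ ≤ n * ρ ^ (n - 1) := by
        gcongr
        · simpa using Nat.norm_cast_le (α := 𝕜) n
        · exact (mem_ball_zero_iff.1 hz).le
    _ < ε := hn

/-- if `q` has an attracting fixed point `z₀` in the open unit disk,
then for every `ε > 0` and all large `n`, `f_n(z) = z^n + q(z)` has a fixed point
`z_n` within `ε` of `z₀` with `|f_n'(z_n)| < 1`. -/
theorem attracting_fixed_point_persists (q : Polynomial ℂ) (z₀ : ℂ)
    (hfix : q.eval z₀ = z₀) (hz₀ : ‖z₀‖ < 1)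
    (hattr : ‖q.derivative.eval z₀‖ < 1) :
    ∀ ε > (0 : ℝ), ∃ N : ℕ, ∀ n ≥ N, ∃ zn : ℂ,
      zn ^ n + q.eval zn = zn ∧ ‖zn - z₀‖ < ε ∧
      ‖(n : ℂ) * zn ^ (n - 1) + q.derivative.eval zn‖ < 1 := by
  intro ε hε
  have hf : ∀ (n : ℕ) z, HasDerivAt (fun z => z ^ n + q.eval z)
      ((n : ℂ) * z ^ (n - 1) + q.derivative.eval z) z :=
    fun n z => (hasDerivAt_pow n z).add (q.hasDerivAt z)
  have hfz₀ : Tendsto (fun n : ℕ => z₀ ^ n + q.eval z₀) atTop (𝓝 z₀) := by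
    simpa [hfix] using (tendsto_pow_atTop_nhds_zero_of_norm_lt_one hz₀).add_const z₀
  have hf' : TendstoLocallyUniformlyOn
      (fun (n : ℕ) z => (n : ℂ) * z ^ (n - 1) + q.derivative.eval z)
      (fun z => q.derivative.eval z) atTop (ball 0 1) := by
    simpa [Pi.add_def] using tendstoLocallyUniformlyOn_natCast_mul_pow_sub_one.add
      (tendstoLocallyUniformlyOn_const atTop (fun z => q.derivative.eval z) (ball 0 1))
  exact eventually_atTop.1 <| eventually_exists_attracting_isFixedPt_near
    (isOpen_ball.mem_nhds (mem_ball_zero_iff.2 hz₀)) (fun n z _ => hf n z) hfz₀ hf'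
    q.derivative.continuous.continuousAt hattr hε
end

section
/- Let q be a polynomial with a repelling fixed point z_0 in the open unit disk, i.e., q(z_0) = z_0 and |q'(z_0)| > 1. Then for every ε > 0 there is N such that for all n ≥ N, f_n(z) = z^n + q(z) has a fixed point z_n with |z_n − z_0| < ε and |f_n'(z_n)| > 1. -/
/-!
Put `F_n z = z ^ n + q z - z` and `a = q'(z₀) - 1`, which is nonzero because `z₀` is repelling.
On a small closed disk around `z₀` inside the unit disk, `n z ^ (n - 1) → 0` uniformly, so for
large `n` the derivative `F_n'` stays uniformly close to `a`, while `F_n z₀ = z₀ ^ n` is tiny.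
Hence `F_n` approximates the invertible linear map `z ↦ a z` on the disk, and the contraction
argument behind the inverse function theorem produces a zero `z_n` of `F_n` in the disk. The same
closeness of derivatives keeps `|f_n'(z_n)|` near `|q'(z₀)| > 1`.
-/

open Metric Filter Topology

section

variable {𝕜 : Type*} [RCLike 𝕜]

theorem Convex.approximatesLinearOn_smulRight_of_norm_deriv_sub_le {F : Type*}
    [NormedAddCommGroup F] [NormedSpace 𝕜 F] {s : Set 𝕜} (hs : Convex ℝ s) {f f' : 𝕜 → F}
    (hf : ∀ z ∈ s, HasDerivWithinAt f (f' z) s z) {a : F} {c : NNReal}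
    (hc : ∀ z ∈ s, ‖f' z - a‖₊ ≤ c) :
    ApproximatesLinearOn f ((1 : 𝕜 →L[𝕜] 𝕜).smulRight a) s c := by
  rw [ApproximatesLinearOn.approximatesLinearOn_iff_lipschitzOnWith]
  refine hs.lipschitzOnWith_of_nnnorm_hasDerivWithin_le (fun z hz => ?_) hc
  have hA : ⇑((1 : 𝕜 →L[𝕜] 𝕜).smulRight a) = fun y => y • a := by ext; simp
  rw [hA]
  simpa using (hf z hz).sub ((hasDerivWithinAt_id z s).smul_const a)

theorem exists_mem_closedBall_eq_zero_of_norm_deriv_sub_le {f f' : 𝕜 → 𝕜} {z₀ a : 𝕜}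
    {δ c : ℝ} (hf : ∀ z ∈ closedBall z₀ δ, HasDerivAt f (f' z) z)
    (hf' : ∀ z ∈ closedBall z₀ δ, ‖f' z - a‖ ≤ c) (hca : c < ‖a‖)
    (hfz₀ : ‖f z₀‖ ≤ (‖a‖ - c) * δ) :
    ∃ z ∈ closedBall z₀ δ, f z = 0 := by
  have hδ : 0 ≤ δ := nonneg_of_mul_nonneg_right ((norm_nonneg _).trans hfz₀) (sub_pos.2 hca)
  have hc : 0 ≤ c := (norm_nonneg _).trans (hf' z₀ (mem_closedBall_self hδ))
  have ha : a ≠ 0 := norm_pos_iff.1 (hc.trans_lt hca)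
  let e := ContinuousLinearEquiv.unitsEquivAut 𝕜 (Units.mk0 a ha)
  have he : (e : 𝕜 →L[𝕜] 𝕜) = (1 : 𝕜 →L[𝕜] 𝕜).smulRight a := by ext; simp [e]
  have happrox : ApproximatesLinearOn f (e : 𝕜 →L[𝕜] 𝕜) (closedBall z₀ δ) ⟨c, hc⟩ := by
    rw [he]
    exact (convex_closedBall z₀ δ).approximatesLinearOn_smulRight_of_norm_deriv_sub_le
      (fun z hz => (hf z hz).hasDerivWithinAt) hf'
  have hnorm : ((e.toNonlinearRightInverse.nnnorm : ℝ))⁻¹ = ‖a‖ := by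
    have : (e.symm : 𝕜 →L[𝕜] 𝕜) = (1 : 𝕜 →L[𝕜] 𝕜).smulRight a⁻¹ := by ext; simp [e]
    simp [ContinuousLinearEquiv.toNonlinearRightInverse, this]
  obtain ⟨z, hz, hfz⟩ := happrox.surjOn_closedBall_of_nonlinearRightInverse
    e.toNonlinearRightInverse hδ subset_rfl
    (show (0 : 𝕜) ∈ closedBall (f z₀) _ by rw [mem_closedBall, dist_zero_left, hnorm]; exact hfz₀)
  exact ⟨z, hz, hfz⟩

theorem tendsto_nat_mul_pow_sub_one_of_lt_one {r : ℝ} (hr0 : 0 ≤ r) (hr : r < 1) :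
    Tendsto (fun n : ℕ => n * r ^ (n - 1)) atTop (𝓝 0) := by
  rw [← tendsto_add_atTop_iff_nat 1]
  simp only [Nat.cast_add, Nat.cast_one, add_tsub_cancel_right, add_mul, one_mul]
  simpa using (tendsto_self_mul_const_pow_of_lt_one hr0 hr).add
    (tendsto_pow_atTop_nhds_zero_of_lt_one hr0 hr)

theorem eventually_norm_nat_mul_pow_sub_one_le {r c : ℝ} (hr0 : 0 ≤ r) (hr : r < 1)
    (hc : 0 < c) : ∀ᶠ n : ℕ in atTop, ∀ z : 𝕜, ‖z‖ ≤ r → ‖(n : 𝕜) * z ^ (n - 1)‖ ≤ c := by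
  filter_upwards [(tendsto_nat_mul_pow_sub_one_of_lt_one hr0 hr).eventually_le_const hc]
    with n hn z hz
  calc ‖(n : 𝕜) * z ^ (n - 1)‖ = n * ‖z‖ ^ (n - 1) := by simp
    _ ≤ n * r ^ (n - 1) := by gcongr
    _ ≤ c := hn

theorem exists_closedBall_eventually_norm_nat_mul_pow_add_sub_le {g : 𝕜 → 𝕜} {z₀ : 𝕜}
    (hg : ContinuousAt g z₀) (hz₀ : ‖z₀‖ < 1) {κ ε : ℝ} (hκ : 0 < κ) (hε : 0 < ε) :
    ∃ δ ∈ Set.Ioo 0 ε, ∀ᶠ n : ℕ in atTop, ∀ z ∈ closedBall z₀ δ,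
      ‖(n : 𝕜) * z ^ (n - 1) + g z - g z₀‖ ≤ κ := by
  obtain ⟨ρ, hρ, hgρ⟩ := Metric.continuousAt_iff.1 hg (κ / 2) (half_pos hκ)
  obtain ⟨δ, hδ, hδε, hδρ, hδ1⟩ : ∃ δ > 0, δ < ε ∧ δ < ρ ∧ ‖z₀‖ + δ < 1 := by
    refine ⟨min (min ε ρ) (1 - ‖z₀‖) / 2, by positivity, ?_, ?_, ?_⟩ <;>
      linarith [min_le_left (min ε ρ) (1 - ‖z₀‖), min_le_right (min ε ρ) (1 - ‖z₀‖),
        min_le_left ε ρ, min_le_right ε ρ]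
  refine ⟨δ, ⟨hδ, hδε⟩, ?_⟩
  filter_upwards [eventually_norm_nat_mul_pow_sub_one_le (𝕜 := 𝕜) (by positivity) hδ1 (half_pos hκ)]
    with n hn z hz
  have hzδ : ‖z - z₀‖ ≤ δ := mem_closedBall_iff_norm.1 hz
  calc ‖(n : 𝕜) * z ^ (n - 1) + g z - g z₀‖ ≤ ‖(n : 𝕜) * z ^ (n - 1)‖ + ‖g z - g z₀‖ := by
        rw [add_sub_assoc]; exact norm_add_le _ _
    _ ≤ κ / 2 + κ / 2 := by
        gcongr
        · exact hn z ((norm_le_norm_add_norm_sub' z z₀).trans (by linarith))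
        · rw [← dist_eq_norm]; exact (hgρ (by rw [dist_eq_norm]; linarith)).le
    _ = κ := add_halves κ

end

/-- if `q` has a repelling fixed point `z₀` in the open unit disk,
then for every `ε > 0` and all large `n`, `f_n(z) = z^n + q(z)` has a fixed point
`z_n` within `ε` of `z₀` with `|f_n'(z_n)| > 1`. -/
theorem repelling_fixed_point_persists (q : Polynomial ℂ) (z₀ : ℂ)
    (hfix : q.eval z₀ = z₀) (hz₀ : ‖z₀‖ < 1)
    (hrep : 1 < ‖q.derivative.eval z₀‖) :
    ∀ ε > (0 : ℝ), ∃ N : ℕ, ∀ n ≥ N, ∃ zn : ℂ,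
      zn ^ n + q.eval zn = zn ∧ ‖zn - z₀‖ < ε ∧
      1 < ‖(n : ℂ) * zn ^ (n - 1) + q.derivative.eval zn‖ := by
  intro ε hε
  set a := q.derivative.eval z₀ - 1
  have ha : 0 < ‖a‖ := norm_pos_iff.2 fun h => by simp [sub_eq_zero.1 h] at hrep
  obtain ⟨κ, hκ, hκa, hκrep⟩ : ∃ κ, 0 < κ ∧ κ < ‖a‖ ∧ κ < ‖q.derivative.eval z₀‖ - 1 :=
    ⟨min ‖a‖ (‖q.derivative.eval z₀‖ - 1) / 2, by positivity,
      by linarith [min_le_left ‖a‖ (‖q.derivative.eval z₀‖ - 1)],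
      by linarith [min_le_right ‖a‖ (‖q.derivative.eval z₀‖ - 1)]⟩
  obtain ⟨δ, ⟨hδ, hδε⟩, hderiv⟩ := exists_closedBall_eventually_norm_nat_mul_pow_add_sub_le
    q.derivative.continuous.continuousAt hz₀ hκ hε
  have hpow : ∀ᶠ n : ℕ in atTop, ‖z₀ ^ n‖ ≤ (‖a‖ - κ) * δ :=
    (tendsto_pow_atTop_nhds_zero_of_norm_lt_one hz₀).norm.eventually_le_const
      (by rw [norm_zero]; exact mul_pos (sub_pos.2 hκa) hδ)
  obtain ⟨N, hN⟩ := (hderiv.and hpow).exists_forall_of_atTop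
  refine ⟨N, fun n hn => ?_⟩
  obtain ⟨hderivn, hpown⟩ := hN n hn
  obtain ⟨zn, hzn, hzero⟩ := exists_mem_closedBall_eq_zero_of_norm_deriv_sub_le
    (f := fun z => z ^ n + q.eval z - z) (f' := fun z => n * z ^ (n - 1) + q.derivative.eval z - 1)
    (fun z _ => ((hasDerivAt_pow n z).add (q.hasDerivAt z)).sub (hasDerivAt_id z))
    (fun z hz => by simpa [a, sub_sub_sub_cancel_right] using hderivn z hz) hκa
    (by simpa [hfix] using hpown)
  refine ⟨zn, sub_eq_zero.1 hzero, (mem_closedBall_iff_norm.1 hzn).trans_lt hδε, ?_⟩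
  calc 1 < ‖q.derivative.eval z₀‖ - κ := by linarith
    _ ≤ ‖(n : ℂ) * zn ^ (n - 1) + q.derivative.eval zn‖ := by
        linarith [hderivn zn hzn,
          norm_le_norm_add_norm_sub ((n : ℂ) * zn ^ (n - 1) + q.derivative.eval zn)
            (q.derivative.eval z₀)]
end
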